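/- arXiv:2205.06587 — 4 statements merged into one kernel-verified Lean document; each statement's English description precedes it below -/
import Mathlib

section
/- Let L > 0 and let θ : [0,L] → ℝ be continuous and not constant on [0,L]. Then det Π(θ) > 0; in particular the matrix Π(θ) is invertible. -/
/-!
`Π(θ)` is the Gram matrix of `sin ∘ θ` and `-cos ∘ θ` on `[0, L]`: its quadratic form is
`(a, b) ↦ ∫ (a sin θ - b cos θ)²`. If `θ` is continuous and not constant, its range contains a
nondegenerate interval, on which `a sin - b cos` cannot vanish identically unless `a = b = 0`
(two zeros at distance in `(0, π)` already force that). So the integrand is positive somewhere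
and the form is positive definite.
-/

noncomputable def PiMat (L : ℝ) (θ : ℝ → ℝ) : Matrix (Fin 2) (Fin 2) ℝ :=
  !![∫ s in (0:ℝ)..L, Real.sin (θ s) ^ 2, -(∫ s in (0:ℝ)..L, Real.sin (θ s) * Real.cos (θ s));
     -(∫ s in (0:ℝ)..L, Real.sin (θ s) * Real.cos (θ s)), ∫ s in (0:ℝ)..L, Real.cos (θ s) ^ 2]

open Real Set Matrix MeasureTheory

lemma eq_zero_of_mul_sin_sub_mul_cos_eq_zero {a b x y : ℝ} (hxy : sin (y - x) ≠ 0)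
    (hx : a * sin x - b * cos x = 0) (hy : a * sin y - b * cos y = 0) : a = 0 ∧ b = 0 := by
  rw [sin_sub] at hxy
  constructor
  · exact (mul_eq_zero.mp (by linear_combination cos x * hy - cos y * hx :
      a * (sin y * cos x - cos y * sin x) = 0)).resolve_right hxy
  · exact (mul_eq_zero.mp (by linear_combination sin x * hy - sin y * hx :
      b * (sin y * cos x - cos y * sin x) = 0)).resolve_right hxy

lemma exists_mem_Icc_mul_sin_sub_mul_cos_ne_zero {a b m M : ℝ} (hmM : m < M)
    (hab : a ≠ 0 ∨ b ≠ 0) : ∃ y ∈ Icc m M, a * sin y - b * cos y ≠ 0 := by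
  by_contra! h
  set δ := min (M - m) 1
  have hδ : 0 < δ := lt_min (sub_pos.mpr hmM) one_pos
  have hsin : sin (m + δ - m) ≠ 0 := by
    rw [add_sub_cancel_left]
    have hδπ : δ < π := (min_le_right _ _).trans_lt (by linarith [pi_gt_three])
    exact (sin_pos_of_pos_of_lt_pi hδ hδπ).ne'
  have hmδ : m + δ ∈ Icc m M := ⟨by linarith, by linarith [min_le_left (M - m) 1]⟩
  have hab0 := eq_zero_of_mul_sin_sub_mul_cos_eq_zero hsin (h m (left_mem_Icc.mpr hmM.le)) (h _ hmδ)
  exact hab.elim (absurd hab0.1) (absurd hab0.2)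

lemma exists_mul_sin_sub_mul_cos_ne_zero {X : Type*} [TopologicalSpace X] {S : Set X}
    (hS : IsPreconnected S) {θ : X → ℝ} (hθ : ContinuousOn θ S)
    (hnc : ∃ s₁ ∈ S, ∃ s₂ ∈ S, θ s₁ ≠ θ s₂) {a b : ℝ} (hab : a ≠ 0 ∨ b ≠ 0) :
    ∃ s ∈ S, a * sin (θ s) - b * cos (θ s) ≠ 0 := by
  obtain ⟨s₁, hs₁, s₂, hs₂, hne⟩ := hnc
  obtain ⟨m, hm, M, hM, hmM⟩ : ∃ m ∈ θ '' S, ∃ M ∈ θ '' S, m < M := by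
    rcases hne.lt_or_gt with h | h
    · exact ⟨_, mem_image_of_mem θ hs₁, _, mem_image_of_mem θ hs₂, h⟩
    · exact ⟨_, mem_image_of_mem θ hs₂, _, mem_image_of_mem θ hs₁, h⟩
  obtain ⟨y, hy, hy_ne⟩ := exists_mem_Icc_mul_sin_sub_mul_cos_ne_zero hmM hab
  obtain ⟨s, hs, rfl⟩ := (hS.image θ hθ).Icc_subset hm hM hy
  exact ⟨s, hs, hy_ne⟩

lemma PiMat_isHermitian (L : ℝ) (θ : ℝ → ℝ) : (PiMat L θ).IsHermitian := by
  ext i j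
  fin_cases i <;> fin_cases j <;> simp [PiMat]

lemma dotProduct_PiMat_mulVec {L : ℝ} {θ : ℝ → ℝ} (hθ : ContinuousOn θ (uIcc 0 L))
    (x : Fin 2 → ℝ) :
    star x ⬝ᵥ (PiMat L θ *ᵥ x) = ∫ s in (0:ℝ)..L, (x 0 * sin (θ s) - x 1 * cos (θ s)) ^ 2 := by
  have hsin2 : IntervalIntegrable (fun s => x 0 ^ 2 * sin (θ s) ^ 2) volume 0 L :=
    ContinuousOn.intervalIntegrable (by fun_prop)
  have hsc : IntervalIntegrable (fun s => 2 * x 0 * x 1 * (sin (θ s) * cos (θ s))) volume 0 L :=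
    ContinuousOn.intervalIntegrable (by fun_prop)
  have hcos2 : IntervalIntegrable (fun s => x 1 ^ 2 * cos (θ s) ^ 2) volume 0 L :=
    ContinuousOn.intervalIntegrable (by fun_prop)
  have hexpand : ∀ s, (x 0 * sin (θ s) - x 1 * cos (θ s)) ^ 2 =
      x 0 ^ 2 * sin (θ s) ^ 2 - 2 * x 0 * x 1 * (sin (θ s) * cos (θ s))
        + x 1 ^ 2 * cos (θ s) ^ 2 := fun s => by ring
  simp_rw [hexpand]
  rw [intervalIntegral.integral_add (hsin2.sub hsc) hcos2,
    intervalIntegral.integral_sub hsin2 hsc, intervalIntegral.integral_const_mul,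
    intervalIntegral.integral_const_mul, intervalIntegral.integral_const_mul]
  simp only [PiMat, mulVec, dotProduct, Fin.sum_univ_two, of_apply, cons_val', cons_val_zero,
    cons_val_one, empty_val', cons_val_fin_one, Pi.star_apply, star_trivial]
  ring

lemma PiMat_posDef {L : ℝ} (hL : 0 < L) {θ : ℝ → ℝ} (hθ : ContinuousOn θ (Icc 0 L))
    (hnc : ∃ s₁ ∈ Icc (0:ℝ) L, ∃ s₂ ∈ Icc (0:ℝ) L, θ s₁ ≠ θ s₂) : (PiMat L θ).PosDef := by
  refine PosDef.of_dotProduct_mulVec_pos (PiMat_isHermitian L θ) fun x hx => ?_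
  have hx' : x 0 ≠ 0 ∨ x 1 ≠ 0 := by
    by_contra! h
    exact hx (funext fun i => by fin_cases i <;> simp [h])
  obtain ⟨s₀, hs₀, hs₀_ne⟩ :=
    exists_mul_sin_sub_mul_cos_ne_zero isPreconnected_Icc hθ hnc hx'
  rw [dotProduct_PiMat_mulVec (by rwa [uIcc_of_le hL.le])]
  exact intervalIntegral.integral_pos hL (by fun_prop) (fun _ _ => sq_nonneg _)
    ⟨s₀, hs₀, by positivity⟩

/-- if `θ` is continuous and not constant on `[0,L]`, then `det Π(θ) > 0`
and `Π(θ)` is invertible. -/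
theorem det_Pi_pos_of_not_constant (L : ℝ) (hL : 0 < L) (θ : ℝ → ℝ)
    (hθ : ContinuousOn θ (Set.Icc 0 L))
    (hnc : ∃ s₁ ∈ Set.Icc (0:ℝ) L, ∃ s₂ ∈ Set.Icc (0:ℝ) L, θ s₁ ≠ θ s₂) :
    0 < (PiMat L θ).det ∧ IsUnit (PiMat L θ) := by
  have hpos := PiMat_posDef hL hθ hnc
  exact ⟨hpos.det_pos, hpos.isUnit⟩
end

section
/- Let L > 0 and K > 0. Then there exists M = M(K,L) > 0 with the following property: for every g ∈ L²(0,L) with ∫₀^L g(σ)² dσ ≤ K and every θ : [0,L] → ℝ of the form θ(s) = θ(0) + ∫₀^s g(σ) dσ which satisfies ∫₀^L cos θ(s) ds = 0, ∫₀^L sin θ(s) ds = 0 and θ(L) − θ(0) ∈ 2πℤ, the matrix Π(θ) is invertible and the operator norm of Π(θ)^{-1} satisfies ‖Π(θ)^{-1}‖ ≤ M. Equivalently, there exists m = m(K,L) > 0 such that det Π(θ) ≥ m for all such θ. -/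
/-- Operator norm of a 2×2 real matrix, acting on Euclidean ℝ². -/
noncomputable def opNorm (A : Matrix (Fin 2) (Fin 2) ℝ) : ℝ :=
  ‖LinearMap.toContinuousLinearMap (Matrix.toEuclideanLin A)‖

open MeasureTheory Set Real intervalIntegral
open scoped RealInnerProductSpace

theorem sq_intervalIntegral_le_mul {g : ℝ → ℝ} {a b : ℝ} (hab : a ≤ b)
    (hg : IntervalIntegrable g volume a b)
    (hg2 : IntervalIntegrable (fun s => g s ^ 2) volume a b) :
    (∫ s in a..b, g s) ^ 2 ≤ (b - a) * ∫ s in a..b, g s ^ 2 := by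
  rcases hab.eq_or_lt with rfl | hlt
  · simp
  set I := ∫ s in a..b, g s
  have hvar : 0 ≤ ∫ s in a..b, ((b - a) * g s - I) ^ 2 :=
    integral_nonneg hab fun _ _ => sq_nonneg _
  have hexpand : ∫ s in a..b, ((b - a) * g s - I) ^ 2
      = (b - a) * ((b - a) * ∫ s in a..b, g s ^ 2) - (b - a) * I ^ 2 := by
    have hfun : (fun s => ((b - a) * g s - I) ^ 2)
        = fun s => ((b - a) ^ 2 * g s ^ 2 - 2 * (b - a) * I * g s) + I ^ 2 := by
      funext s; ring
    rw [hfun, integral_add ((hg2.const_mul _).sub (hg.const_mul _)) intervalIntegrable_const,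
      integral_sub (hg2.const_mul _) (hg.const_mul _), intervalIntegral.integral_const_mul,
      intervalIntegral.integral_const_mul, intervalIntegral.integral_const, smul_eq_mul]
    ring
  nlinarith [sub_pos.2 hlt]

section Primitive

variable {L : ℝ} {g θ : ℝ → ℝ}

theorem continuousOn_of_eq_add_integral (hL : 0 ≤ L) (hg : IntegrableOn g (Icc 0 L))
    (hθ : ∀ s ∈ Icc 0 L, θ s = θ 0 + ∫ σ in (0:ℝ)..s, g σ) : ContinuousOn θ (Icc 0 L) := by
  rw [← uIcc_of_le hL] at hg ⊢
  exact (continuousOn_const.add (continuousOn_primitive_interval hg)).congr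
    (by rwa [uIcc_of_le hL])

theorem sq_sub_le_mul_integral_sq (hg : IntegrableOn g (Icc 0 L))
    (hg2 : IntegrableOn (fun s => g s ^ 2) (Icc 0 L))
    (hθ : ∀ s ∈ Icc 0 L, θ s = θ 0 + ∫ σ in (0:ℝ)..s, g σ)
    {t₁ t₂ : ℝ} (h₀ : 0 ≤ t₁) (h₁₂ : t₁ ≤ t₂) (h₂ : t₂ ≤ L) :
    (θ t₂ - θ t₁) ^ 2 ≤ (t₂ - t₁) * ∫ s in (0:ℝ)..L, g s ^ 2 := by
  have hsub : ∀ {f : ℝ → ℝ} {a b : ℝ}, IntegrableOn f (Icc 0 L) → 0 ≤ a → a ≤ b → b ≤ L →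
      IntervalIntegrable f volume a b := fun hf ha hab hb =>
    (hf.mono_set (by rw [uIcc_of_le hab]; exact Icc_subset_Icc ha hb)).intervalIntegrable
  have hincr : θ t₂ - θ t₁ = ∫ σ in t₁..t₂, g σ := by
    rw [hθ t₂ ⟨h₀.trans h₁₂, h₂⟩, hθ t₁ ⟨h₀, h₁₂.trans h₂⟩, add_sub_add_left_eq_sub,
      integral_interval_sub_left (hsub hg le_rfl (h₀.trans h₁₂) h₂)
        (hsub hg le_rfl h₀ (h₁₂.trans h₂))]
  calc (θ t₂ - θ t₁) ^ 2 ≤ (t₂ - t₁) * ∫ s in t₁..t₂, g s ^ 2 := by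
        rw [hincr]; exact sq_intervalIntegral_le_mul h₁₂ (hsub hg h₀ h₁₂ h₂) (hsub hg2 h₀ h₁₂ h₂)
    _ ≤ (t₂ - t₁) * ∫ s in (0:ℝ)..L, g s ^ 2 :=
        mul_le_mul_of_nonneg_left (integral_mono_interval h₀ h₁₂ h₂
          (Filter.Eventually.of_forall fun _ => sq_nonneg _)
          (hsub hg2 le_rfl (h₀.trans (h₁₂.trans h₂)) le_rfl))
          (sub_nonneg.2 h₁₂)

end Primitive

theorem exists_crossing_Ioo {h : ℝ → ℝ} {u v a b : ℝ} (huv : u ≤ v)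
    (hh : ContinuousOn h (Icc u v)) (hu : b ≤ h u) (hv : h v ≤ a) :
    ∃ t₁ t₂, u ≤ t₁ ∧ t₁ ≤ t₂ ∧ t₂ ≤ v ∧ b ≤ h t₁ ∧ h t₂ ≤ a ∧
      ∀ t ∈ Ioo t₁ t₂, a < h t ∧ h t < b := by
  set S₂ := Icc u v ∩ h ⁻¹' Iic a
  have hS₂ : BddBelow S₂ := ⟨u, fun _ ht => ht.1.1⟩
  obtain ⟨⟨hut₂, ht₂v⟩, ht₂a⟩ : sInf S₂ ∈ S₂ :=
    (hh.preimage_isClosed_of_isClosed isClosed_Icc isClosed_Iic).csInf_mem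
      ⟨v, ⟨huv, le_rfl⟩, hv⟩ hS₂
  set S₁ := Icc u (sInf S₂) ∩ h ⁻¹' Ici b
  have hS₁ : BddAbove S₁ := ⟨sInf S₂, fun _ ht => ht.1.2⟩
  obtain ⟨⟨hut₁, ht₁t₂⟩, ht₁b⟩ : sSup S₁ ∈ S₁ :=
    ((hh.mono (Icc_subset_Icc le_rfl ht₂v)).preimage_isClosed_of_isClosed isClosed_Icc
      isClosed_Ici).csSup_mem ⟨u, ⟨le_rfl, hut₂⟩, hu⟩ hS₁
  refine ⟨sSup S₁, sInf S₂, hut₁, ht₁t₂, ht₂v, ht₁b, ht₂a, fun t ⟨ht₁, ht₂⟩ => ⟨?_, ?_⟩⟩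
  · by_contra! hta
    exact notMem_of_lt_csInf ht₂ hS₂ ⟨⟨hut₁.trans ht₁.le, ht₂.le.trans ht₂v⟩, hta⟩
  · by_contra! htb
    exact notMem_of_csSup_lt ht₁ hS₁ ⟨⟨hut₁.trans ht₁.le, ht₂.le⟩, htb⟩

theorem exists_crossing_abs_lt {f : ℝ → ℝ} {p q c s₁ s₂ : ℝ} (hf : ContinuousOn f (Icc p q))
    (hs₁ : s₁ ∈ Icc p q) (hs₂ : s₂ ∈ Icc p q) (hf₁ : c ≤ f s₁) (hf₂ : f s₂ ≤ -c) :
    ∃ t₁ t₂, p ≤ t₁ ∧ t₁ ≤ t₂ ∧ t₂ ≤ q ∧ 2 * c ≤ |f t₁ - f t₂| ∧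
      ∀ t ∈ Ioo t₁ t₂, |f t| < c := by
  rcases le_total s₁ s₂ with h | h
  · obtain ⟨t₁, t₂, hu, h₁₂, hv, hb, ha, hmid⟩ :=
      exists_crossing_Ioo h (hf.mono (Icc_subset_Icc hs₁.1 hs₂.2)) hf₁ hf₂
    exact ⟨t₁, t₂, hs₁.1.trans hu, h₁₂, hv.trans hs₂.2, le_abs.2 (Or.inl (by linarith)),
      fun t ht => abs_lt.2 (hmid t ht)⟩
  · obtain ⟨t₁, t₂, hu, h₁₂, hv, hb, ha, hmid⟩ :=
      exists_crossing_Ioo (h := fun t => -f t) h (hf.mono (Icc_subset_Icc hs₂.1 hs₁.2)).neg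
        (le_neg.2 hf₂) (neg_le_neg hf₁)
    refine ⟨t₁, t₂, hs₂.1.trans hu, h₁₂, hv.trans hs₁.2, ?_, fun t ht => ?_⟩
    · exact le_abs.2 (Or.inr (by linarith))
    · obtain ⟨h₁, h₂⟩ := hmid t ht
      exact abs_lt.2 ⟨by linarith, by linarith⟩

theorem exists_quarter_le_of_integral_eq_zero {f : ℝ → ℝ} {L : ℝ} (hL : 0 ≤ L)
    (hf : IntervalIntegrable f volume 0 L) (hf2 : IntervalIntegrable (fun s => f s ^ 2) volume 0 L)
    (hf_ge : ∀ s ∈ Icc 0 L, -1 ≤ f s) (hf_int : ∫ s in (0:ℝ)..L, f s = 0)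
    (hf2_int : L / 4 < ∫ s in (0:ℝ)..L, f s ^ 2) : ∃ s ∈ Icc 0 L, 1 / 4 ≤ f s := by
  by_contra! hlt
  -- on `[-1, 1/4]` the parabola `f ^ 2` lies below its chord
  have hchord : ∀ s ∈ Icc 0 L, f s ^ 2 ≤ 1 / 4 - 3 / 4 * f s := fun s hs => by
    nlinarith [hlt s hs, hf_ge s hs]
  have := integral_mono_on hL hf2 (intervalIntegrable_const.sub (hf.const_mul _)) hchord
  rw [integral_sub intervalIntegrable_const (hf.const_mul _), intervalIntegral.integral_const_mul,
    hf_int, intervalIntegral.integral_const, smul_eq_mul] at this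
  linarith

theorem mul_sub_le_integral_sin_sq {ψ : ℝ → ℝ} {L c t₁ t₂ : ℝ} (hψ : ContinuousOn ψ (Icc 0 L))
    (h₀ : 0 ≤ t₁) (h₁₂ : t₁ ≤ t₂) (h₂ : t₂ ≤ L) (hband : ∀ t ∈ Ioo t₁ t₂, |cos (ψ t)| < c) :
    (1 - c ^ 2) * (t₂ - t₁) ≤ ∫ s in (0:ℝ)..L, sin (ψ s) ^ 2 := by
  have hsin2 : ContinuousOn (fun s => sin (ψ s) ^ 2) (Icc 0 L) :=
    (continuous_sin.comp_continuousOn hψ).pow 2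
  calc (1 - c ^ 2) * (t₂ - t₁) = ∫ _ in t₁..t₂, (1 - c ^ 2) := by
        rw [intervalIntegral.integral_const, smul_eq_mul, mul_comm]
    _ ≤ ∫ s in t₁..t₂, sin (ψ s) ^ 2 := by
        refine integral_mono_on_of_le_Ioo h₁₂ intervalIntegrable_const
          ((hsin2.mono (Icc_subset_Icc h₀ h₂)).intervalIntegrable_of_Icc h₁₂) fun t ht => ?_
        have := sq_lt_sq' (abs_lt.1 (hband t ht)).1 (abs_lt.1 (hband t ht)).2
        nlinarith [sin_sq_add_cos_sq (ψ t)]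
    _ ≤ ∫ s in (0:ℝ)..L, sin (ψ s) ^ 2 :=
        integral_mono_interval h₀ h₁₂ h₂ (Filter.Eventually.of_forall fun _ => sq_nonneg _)
          (hsin2.intervalIntegrable_of_Icc (h₀.trans (h₁₂.trans h₂)))

theorem min_le_integral_sin_sq {L K : ℝ} {g ψ : ℝ → ℝ} (hL : 0 < L) (hK : 0 < K)
    (hg : IntegrableOn g (Icc 0 L)) (hg2 : IntegrableOn (fun s => g s ^ 2) (Icc 0 L))
    (hgK : ∫ s in (0:ℝ)..L, g s ^ 2 ≤ K)
    (hψ : ∀ s ∈ Icc 0 L, ψ s = ψ 0 + ∫ σ in (0:ℝ)..s, g σ)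
    (hcos : ∫ s in (0:ℝ)..L, cos (ψ s) = 0) :
    min (L / 2) (1 / (8 * K)) ≤ ∫ s in (0:ℝ)..L, sin (ψ s) ^ 2 := by
  have hψc := continuousOn_of_eq_add_integral hL.le hg hψ
  have hc : ContinuousOn (fun s => cos (ψ s)) (Icc 0 L) := continuous_cos.comp_continuousOn hψc
  have hcI : IntervalIntegrable (fun s => cos (ψ s)) volume 0 L :=
    hc.intervalIntegrable_of_Icc hL.le
  have hc2I : IntervalIntegrable (fun s => cos (ψ s) ^ 2) volume 0 L :=
    (hc.pow 2).intervalIntegrable_of_Icc hL.le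
  have hs2I : IntervalIntegrable (fun s => sin (ψ s) ^ 2) volume 0 L :=
    ((continuous_sin.comp_continuousOn hψc).pow 2).intervalIntegrable_of_Icc hL.le
  refine min_le_iff.2 (or_iff_not_imp_left.2 fun hsmall => ?_)
  have hcos2 : L / 4 < ∫ s in (0:ℝ)..L, cos (ψ s) ^ 2 := by
    have hpyth : ∫ s in (0:ℝ)..L, (sin (ψ s) ^ 2 + cos (ψ s) ^ 2) = L := by
      simp only [sin_sq_add_cos_sq, intervalIntegral.integral_const, smul_eq_mul, mul_one, sub_zero]
    rw [integral_add hs2I hc2I] at hpyth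
    linarith
  obtain ⟨s₁, hs₁, hcos₁⟩ := exists_quarter_le_of_integral_eq_zero hL.le hcI hc2I
    (fun s _ => neg_one_le_cos _) hcos hcos2
  obtain ⟨s₂, hs₂, hcos₂⟩ :=
    exists_quarter_le_of_integral_eq_zero (f := fun s => -cos (ψ s)) hL.le hcI.neg
    (by simpa only [neg_sq] using hc2I) (fun s _ => neg_le_neg (cos_le_one _))
    (by rw [intervalIntegral.integral_neg, hcos, neg_zero]) (by simpa only [neg_sq] using hcos2)
  obtain ⟨t₁, t₂, h₀, h₁₂, h₂, hjump, hband⟩ :=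
    exists_crossing_abs_lt hc hs₁ hs₂ hcos₁ (le_neg.1 hcos₂)
  have htravel : 1 / 4 ≤ (t₂ - t₁) * K :=
    calc 1 / 4 ≤ (ψ t₂ - ψ t₁) ^ 2 := by
          have := hjump.trans (abs_cos_sub_cos_le (ψ t₁) (ψ t₂))
          rw [abs_sub_comm] at this
          nlinarith [sq_abs (ψ t₂ - ψ t₁)]
      _ ≤ (t₂ - t₁) * ∫ s in (0:ℝ)..L, g s ^ 2 := sq_sub_le_mul_integral_sq hg hg2 hψ h₀ h₁₂ h₂
      _ ≤ (t₂ - t₁) * K := mul_le_mul_of_nonneg_left hgK (sub_nonneg.2 h₁₂)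
  have hband_int := mul_sub_le_integral_sin_sq hψc h₀ h₁₂ h₂ hband
  rw [div_le_iff₀ (by positivity)]
  nlinarith

theorem EuclideanSpace.exists_polar (x : EuclideanSpace ℝ (Fin 2)) :
    ∃ φ, x 0 = ‖x‖ * cos φ ∧ x 1 = ‖x‖ * sin φ := by
  set z : ℂ := ⟨x 0, x 1⟩
  have hz : ‖z‖ = ‖x‖ := by
    rw [Complex.norm_eq_sqrt_sq_add_sq, EuclideanSpace.norm_eq]
    simp [Fin.sum_univ_two, z]
  exact ⟨Complex.arg z, by rw [← hz, Complex.norm_mul_cos_arg],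
    by rw [← hz, Complex.norm_mul_sin_arg]⟩

theorem inner_toEuclideanLin_PiMat {L : ℝ} {θ : ℝ → ℝ} (hL : 0 ≤ L) (hθ : ContinuousOn θ (Icc 0 L))
    (x : EuclideanSpace ℝ (Fin 2)) :
    ⟪x, Matrix.toEuclideanLin (PiMat L θ) x⟫ =
      ∫ s in (0:ℝ)..L, (x 0 * sin (θ s) - x 1 * cos (θ s)) ^ 2 := by
  have hs := continuous_sin.comp_continuousOn hθ
  have hc := continuous_cos.comp_continuousOn hθ
  have hss : IntervalIntegrable (fun s => sin (θ s) ^ 2) volume 0 L :=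
    (hs.pow 2).intervalIntegrable_of_Icc hL
  have hsc : IntervalIntegrable (fun s => sin (θ s) * cos (θ s)) volume 0 L :=
    (hs.mul hc).intervalIntegrable_of_Icc hL
  have hcc : IntervalIntegrable (fun s => cos (θ s) ^ 2) volume 0 L :=
    (hc.pow 2).intervalIntegrable_of_Icc hL
  have hexpand : (fun s => (x 0 * sin (θ s) - x 1 * cos (θ s)) ^ 2) = fun s =>
      (x 0 ^ 2 * sin (θ s) ^ 2 - 2 * x 0 * x 1 * (sin (θ s) * cos (θ s)))
        + x 1 ^ 2 * cos (θ s) ^ 2 := by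
    funext s; ring
  rw [hexpand, integral_add ((hss.const_mul _).sub (hsc.const_mul _)) (hcc.const_mul _),
    integral_sub (hss.const_mul _) (hsc.const_mul _), intervalIntegral.integral_const_mul,
    intervalIntegral.integral_const_mul, intervalIntegral.integral_const_mul]
  simp only [PiMat, Matrix.toLpLin_apply, Matrix.cons_mulVec, Matrix.empty_mulVec, dotProduct,
    Fin.sum_univ_two, Matrix.cons_val_zero, Matrix.cons_val_one, Matrix.cons_val_fin_one,
    PiLp.inner_apply, RCLike.inner_apply, conj_trivial]
  ring

theorem min_mul_norm_sq_le_inner_PiMat {L K : ℝ} {g θ : ℝ → ℝ} (hL : 0 < L) (hK : 0 < K)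
    (hg : IntegrableOn g (Icc 0 L)) (hg2 : IntegrableOn (fun s => g s ^ 2) (Icc 0 L))
    (hgK : ∫ s in (0:ℝ)..L, g s ^ 2 ≤ K)
    (hθ : ∀ s ∈ Icc 0 L, θ s = θ 0 + ∫ σ in (0:ℝ)..s, g σ)
    (hcos : ∫ s in (0:ℝ)..L, cos (θ s) = 0) (hsin : ∫ s in (0:ℝ)..L, sin (θ s) = 0)
    (x : EuclideanSpace ℝ (Fin 2)) :
    min (L / 2) (1 / (8 * K)) * ‖x‖ ^ 2 ≤ ⟪x, Matrix.toEuclideanLin (PiMat L θ) x⟫ := by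
  have hθc := continuousOn_of_eq_add_integral hL.le hg hθ
  obtain ⟨φ, hx₀, hx₁⟩ := x.exists_polar
  have hcI : IntervalIntegrable (fun s => cos (θ s)) volume 0 L :=
    (continuous_cos.comp_continuousOn hθc).intervalIntegrable_of_Icc hL.le
  have hsI : IntervalIntegrable (fun s => sin (θ s)) volume 0 L :=
    (continuous_sin.comp_continuousOn hθc).intervalIntegrable_of_Icc hL.le
  have hrot : ∫ s in (0:ℝ)..L, cos (θ s - φ) = 0 := by
    simp only [cos_sub]
    rw [integral_add (hcI.mul_const _) (hsI.mul_const _), intervalIntegral.integral_mul_const,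
      intervalIntegral.integral_mul_const, hcos, hsin, zero_mul, zero_mul, add_zero]
  have hmin := min_le_integral_sin_sq hL hK hg hg2 hgK
    (fun s hs => by rw [hθ s hs]; ring) hrot
  rw [inner_toEuclideanLin_PiMat hL.le hθc, hx₀, hx₁]
  calc _ ≤ ‖x‖ ^ 2 * ∫ s in (0:ℝ)..L, sin (θ s - φ) ^ 2 := by
        rw [mul_comm]; exact mul_le_mul_of_nonneg_left hmin (sq_nonneg _)
    _ = _ := by
        rw [← intervalIntegral.integral_const_mul]
        congr 1; funext s; rw [sin_sub]; ring

section Coercive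

variable {n : Type*} [Fintype n] [DecidableEq n] {A : Matrix n n ℝ} {m : ℝ}

theorem Matrix.mul_norm_le_norm_toEuclideanLin
    (hA : ∀ x : EuclideanSpace ℝ n, m * ‖x‖ ^ 2 ≤ ⟪x, Matrix.toEuclideanLin A x⟫)
    (x : EuclideanSpace ℝ n) : m * ‖x‖ ≤ ‖Matrix.toEuclideanLin A x‖ := by
  rcases (norm_nonneg x).eq_or_lt with hx | hx
  · rw [← hx, mul_zero]; exact norm_nonneg _
  · refine le_of_mul_le_mul_left ?_ hx
    nlinarith [hA x, real_inner_le_norm x (Matrix.toEuclideanLin A x)]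

theorem Matrix.isUnit_of_coercive (hm : 0 < m)
    (hA : ∀ x : EuclideanSpace ℝ n, m * ‖x‖ ^ 2 ≤ ⟪x, Matrix.toEuclideanLin A x⟫) : IsUnit A := by
  refine Matrix.mulVec_injective_iff_isUnit.1 fun v w hvw => ?_
  have h := Matrix.mul_norm_le_norm_toEuclideanLin hA (WithLp.toLp 2 (v - w))
  rw [Matrix.toLpLin_toLp, Matrix.toLin'_apply, Matrix.mulVec_sub, hvw, sub_self,
    WithLp.toLp_zero, norm_zero] at h
  have := norm_le_zero_iff.1 (nonpos_of_mul_nonpos_right h hm)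
  simpa [sub_eq_zero] using this

theorem Matrix.norm_toEuclideanLin_inv_le (hm : 0 < m)
    (hA : ∀ x : EuclideanSpace ℝ n, m * ‖x‖ ^ 2 ≤ ⟪x, Matrix.toEuclideanLin A x⟫) :
    ‖LinearMap.toContinuousLinearMap (Matrix.toEuclideanLin A⁻¹)‖ ≤ m⁻¹ := by
  refine ContinuousLinearMap.opNorm_le_bound _ (inv_nonneg.2 hm.le) fun y => ?_
  have h := Matrix.mul_norm_le_norm_toEuclideanLin hA (Matrix.toEuclideanLin A⁻¹ y)
  rw [← LinearMap.comp_apply, ← Matrix.toLpLin_mul_same,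
    Matrix.mul_nonsing_inv _ ((Matrix.isUnit_iff_isUnit_det A).1 (Matrix.isUnit_of_coercive hm hA)),
    Matrix.toLpLin_one, LinearMap.id_apply] at h
  exact (le_inv_mul_iff₀ hm).2 h

end Coercive

/-- uniform bound on `‖Π(θ)⁻¹‖` over all `θ ∈ W^{1,2}(0,L)` with
`∫₀^L (∂_sθ)² ≤ K` describing a closed curve. -/
theorem Pi_inv_uniform_bound (L K : ℝ) (hL : 0 < L) (hK : 0 < K) :
    ∃ M > 0, ∀ (g θ : ℝ → ℝ),
      MeasureTheory.IntegrableOn g (Set.Icc 0 L) →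
      MeasureTheory.IntegrableOn (fun s => g s ^ 2) (Set.Icc 0 L) →
      (∫ s in (0:ℝ)..L, g s ^ 2) ≤ K →
      (∀ s ∈ Set.Icc (0:ℝ) L, θ s = θ 0 + ∫ σ in (0:ℝ)..s, g σ) →
      (∫ s in (0:ℝ)..L, Real.cos (θ s)) = 0 →
      (∫ s in (0:ℝ)..L, Real.sin (θ s)) = 0 →
      (∃ k : ℤ, θ L - θ 0 = 2 * Real.pi * (k : ℝ)) →
      IsUnit (PiMat L θ) ∧ opNorm (PiMat L θ)⁻¹ ≤ M := by
  have hm : 0 < min (L / 2) (1 / (8 * K)) := lt_min (by positivity) (by positivity)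
  refine ⟨_, inv_pos.2 hm, fun g θ hg hg2 hgK hθ hcos hsin _ => ?_⟩
  have hcoer := min_mul_norm_sq_le_inner_PiMat hL hK hg hg2 hgK hθ hcos hsin
  exact ⟨Matrix.isUnit_of_coercive hm hcoer, Matrix.norm_toEuclideanLin_inv_le hm hcoer⟩
end

section
/- Let (θ,ρ) be a smooth solution of the flow system on [0,T)×[0,L]. Then for every t ∈ (0,T), the time derivatives of ∫₀^L cos θ(t,s) ds and of ∫₀^L sin θ(t,s) ds vanish; in particular, if ∫₀^L cos θ(0,s) ds = 0 and ∫₀^L sin θ(0,s) ds = 0, then these integrals vanish for all t ∈ [0,T). -/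
/-- The Lagrange multipliers `(λ_{θ1}, λ_{θ2})ᵀ = Π(θ)⁻¹ ∫₀^L (−sin θ, cos θ)ᵀ ∂_s[β(ρ)(∂_sθ − c₀)] ds`. -/
noncomputable def lambdaTheta (L c₀ : ℝ) (β : ℝ → ℝ) (θ ρ : ℝ → ℝ) : Fin 2 → ℝ :=
  (PiMat L θ)⁻¹.mulVec
    ![∫ s in (0:ℝ)..L, (-Real.sin (θ s)) * deriv (fun x => β (ρ x) * (deriv θ x - c₀)) s,
      ∫ s in (0:ℝ)..L, Real.cos (θ s) * deriv (fun x => β (ρ x) * (deriv θ x - c₀)) s]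

/-- The Lagrange multiplier `λ_ρ = −(1/(2L)) ∫₀^L β'(ρ)(∂_sθ − c₀)² ds`. -/
noncomputable def lambdaRho (L c₀ : ℝ) (β : ℝ → ℝ) (θ ρ : ℝ → ℝ) : ℝ :=
  -(1 / (2 * L)) * ∫ s in (0:ℝ)..L, deriv β (ρ s) * (deriv θ s - c₀) ^ 2

/-- A smooth solution of the flow system on `I × [0,L]`, where `I` is the set of times. -/
structure IsFlowSolution (L μ c₀ : ℝ) (ω : ℤ) (β : ℝ → ℝ) (I : Set ℝ)
    (θ ρ : ℝ → ℝ → ℝ) : Prop where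
  smooth_theta : ContDiffOn ℝ (⊤ : ℕ∞) (Function.uncurry θ) (I ×ˢ Set.Icc (0:ℝ) L)
  smooth_rho : ContDiffOn ℝ (⊤ : ℕ∞) (Function.uncurry ρ) (I ×ˢ Set.Icc (0:ℝ) L)
  pi_unit : ∀ t ∈ I, IsUnit (PiMat L (θ t))
  eqn_theta : ∀ t ∈ I, ∀ s ∈ Set.Icc (0:ℝ) L,
    deriv (fun τ => θ τ s) t =
      deriv (fun x => β (ρ t x) * (deriv (θ t) x - c₀)) s
      + lambdaTheta L c₀ β (θ t) (ρ t) 0 * Real.sin (θ t s)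
      - lambdaTheta L c₀ β (θ t) (ρ t) 1 * Real.cos (θ t s)
  eqn_rho : ∀ t ∈ I, ∀ s ∈ Set.Icc (0:ℝ) L,
    deriv (fun τ => ρ τ s) t =
      μ * deriv (deriv (ρ t)) s
      - (1/2) * deriv β (ρ t s) * (deriv (θ t) s - c₀) ^ 2
      - lambdaRho L c₀ β (θ t) (ρ t)
  bc_theta : ∀ t ∈ I, θ t L - θ t 0 = 2 * Real.pi * (ω : ℝ)
  bc_rho : ∀ t ∈ I, ρ t L = ρ t 0
  bc_dtheta : ∀ t ∈ I, deriv (θ t) L = deriv (θ t) 0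
  bc_drho : ∀ t ∈ I, deriv (ρ t) L = deriv (ρ t) 0



open Set MeasureTheory Filter Metric intervalIntegral Topology
set_option maxHeartbeats 1000000

lemma timeDeriv_integral {L T : ℝ} (hL : 0 < L) {θ : ℝ → ℝ → ℝ}
    (hθ : ContDiffOn ℝ (⊤ : ℕ∞) (Function.uncurry θ) (Set.Ico (0:ℝ) T ×ˢ Set.Icc (0:ℝ) L))
    {t : ℝ} (ht : t ∈ Set.Ioo (0:ℝ) T) {g : ℝ → ℝ} (hg : ContDiff ℝ (⊤ : ℕ∞) g) :
    HasDerivAt (fun τ => ∫ s in (0:ℝ)..L, g (θ τ s))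
      (∫ s in (0:ℝ)..L, deriv g (θ t s) * deriv (fun τ => θ τ s) t) t := by
  set P : Set (ℝ × ℝ) := Set.Ico (0:ℝ) T ×ˢ Set.Icc (0:ℝ) L with hPdef
  have hPu : UniqueDiffOn ℝ P := (uniqueDiffOn_Ico 0 T).prod (uniqueDiffOn_Icc hL)
  have hφ1 : ContDiffOn ℝ (⊤ : ℕ∞) (fun p => fderivWithin ℝ (Function.uncurry θ) P p) P :=
    hθ.fderivWithin hPu (by simp)
  set φ : ℝ × ℝ → (ℝ × ℝ) →L[ℝ] ℝ := fun p => fderivWithin ℝ (Function.uncurry θ) P p with hφdef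
  have hGc : ContinuousOn (fun p : ℝ × ℝ => deriv g (Function.uncurry θ p) * (φ p) (1, 0)) P :=
    ((hg.continuous_deriv (by simp)).comp_continuousOn hθ.continuousOn).mul
      (hφ1.continuousOn.clm_apply continuousOn_const)
  have hθdiff : ∀ x ∈ Set.Ioo (0:ℝ) T, ∀ s ∈ Set.Icc (0:ℝ) L,
      HasDerivAt (fun τ => θ τ s) ((φ (x, s)) (1, 0)) x := by
    intro x hx s hs
    have hmem : (x, s) ∈ P := ⟨⟨hx.1.le, hx.2⟩, hs⟩
    have hFd : HasFDerivWithinAt (Function.uncurry θ) (φ (x, s)) P (x, s) :=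
      ((hθ.differentiableOn (by simp)) (x, s) hmem).hasFDerivWithinAt
    have hline : HasDerivAt (fun τ : ℝ => ((τ, s) : ℝ × ℝ)) ((1:ℝ), (0:ℝ)) x :=
      HasDerivAt.prodMk (hasDerivAt_id x) (hasDerivAt_const x s)
    have hcomp : HasDerivWithinAt (fun τ => θ τ s) ((φ (x, s)) (1, 0)) (Set.Ico 0 T) x :=
      by have := hFd.comp_hasDerivWithinAt x hline.hasDerivWithinAt
           (show Set.MapsTo (fun τ : ℝ => ((τ, s) : ℝ × ℝ)) (Set.Ico 0 T) P from fun τ hτ => ⟨hτ, hs⟩)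
         exact this
    exact hcomp.hasDerivAt (Ico_mem_nhds hx.1 hx.2)
  have hkey : ∀ x ∈ Set.Ioo (0:ℝ) T, ∀ s ∈ Set.Icc (0:ℝ) L,
      HasDerivAt (fun τ => g (θ τ s)) (deriv g (θ x s) * (φ (x, s)) (1, 0)) x := by
    intro x hx s hs
    have h2 : HasDerivAt g (deriv g (θ x s)) (θ x s) :=
      ((hg.differentiable (by simp)) (θ x s)).hasDerivAt
    exact h2.comp x (hθdiff x hx s hs)
  obtain ⟨ε, hε, hball⟩ : ∃ ε > 0, Set.Icc (t - ε) (t + ε) ⊆ Set.Ioo 0 T := by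
    refine ⟨min (t/2) ((T - t)/2), lt_min (by linarith [ht.1]) (by linarith [ht.2]), ?_⟩
    intro x hx
    have h1 := min_le_left (t/2) ((T - t)/2)
    have h2 := min_le_right (t/2) ((T - t)/2)
    obtain ⟨hx1, hx2⟩ := hx
    constructor <;> [linarith [ht.1]; linarith [ht.2]]
  have hKP : Set.Icc (t - ε) (t + ε) ×ˢ Set.Icc (0:ℝ) L ⊆ P := fun p hp =>
    ⟨⟨(hball hp.1).1.le, (hball hp.1).2⟩, hp.2⟩
  obtain ⟨C, hC⟩ := (isCompact_Icc.prod isCompact_Icc).exists_bound_of_continuousOn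
    (hGc.mono hKP)
  have hIoc : Set.uIoc (0:ℝ) L = Set.Ioc 0 L := Set.uIoc_of_le hL.le
  have hslice : ∀ x ∈ Set.Ico (0:ℝ) T, ContinuousOn (fun s => θ x s) (Set.Icc (0:ℝ) L) := by
    intro x hx
    exact hθ.continuousOn.comp (continuous_const.prodMk continuous_id).continuousOn
      (fun s hs => ⟨hx, hs⟩)
  have hmeas : ∀ᶠ x in 𝓝 t, AEStronglyMeasurable (fun s => g (θ x s))
      (volume.restrict (Set.uIoc (0:ℝ) L)) := by
    filter_upwards [Ioo_mem_nhds ht.1 ht.2] with x hx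
    rw [hIoc]
    exact ((hg.continuous.comp_continuousOn
      (hslice x ⟨hx.1.le, hx.2⟩)).mono Set.Ioc_subset_Icc_self).aestronglyMeasurable
      measurableSet_Ioc
  have hint : IntervalIntegrable (fun s => g (θ t s)) volume 0 L := by
    apply ContinuousOn.intervalIntegrable
    rw [Set.uIcc_of_le hL.le]
    exact hg.continuous.comp_continuousOn (hslice t ⟨ht.1.le, ht.2⟩)
  have hF'meas : AEStronglyMeasurable (fun s => deriv g (θ t s) * (φ (t, s)) (1, 0))
      (volume.restrict (Set.uIoc (0:ℝ) L)) := by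
    rw [hIoc]
    have : ContinuousOn (fun s : ℝ => deriv g (θ t s) * (φ (t, s)) (1, 0)) (Set.Icc 0 L) :=
      hGc.comp (continuous_const.prodMk continuous_id).continuousOn
        (fun s hs => ⟨⟨ht.1.le, ht.2⟩, hs⟩)
    exact (this.mono Set.Ioc_subset_Icc_self).aestronglyMeasurable measurableSet_Ioc
  have hballIoo : Metric.ball t ε ⊆ Set.Ioo 0 T := by
    intro x hx
    apply hball
    rw [Real.ball_eq_Ioo] at hx
    exact Set.Ioo_subset_Icc_self hx
  have hboundmem : ∀ x ∈ Metric.ball t ε, x ∈ Set.Icc (t - ε) (t + ε) := by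
    intro x hx
    rw [Real.ball_eq_Ioo] at hx
    exact Set.Ioo_subset_Icc_self hx
  have h_bound : ∀ᵐ s ∂(volume : Measure ℝ), s ∈ Set.uIoc (0:ℝ) L →
      ∀ x ∈ Metric.ball t ε, ‖deriv g (θ x s) * (φ (x, s)) (1, 0)‖ ≤ C := by
    refine Eventually.of_forall fun s hs x hx => ?_
    rw [hIoc] at hs
    exact hC (x, s) ⟨hboundmem x hx, Set.Ioc_subset_Icc_self hs⟩
  have h_diff : ∀ᵐ s ∂(volume : Measure ℝ), s ∈ Set.uIoc (0:ℝ) L →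
      ∀ x ∈ Metric.ball t ε, HasDerivAt (fun x => g (θ x s))
        (deriv g (θ x s) * (φ (x, s)) (1, 0)) x := by
    refine Eventually.of_forall fun s hs x hx => ?_
    rw [hIoc] at hs
    exact hkey x (hballIoo hx) s (Set.Ioc_subset_Icc_self hs)
  have hmain := (intervalIntegral.hasDerivAt_integral_of_dominated_loc_of_deriv_le (ball_mem_nhds t hε) hmeas hint
    hF'meas h_bound (intervalIntegrable_const) h_diff).2
  have heq : (∫ s in (0:ℝ)..L, deriv g (θ t s) * (φ (t, s)) (1, 0)) =
      ∫ s in (0:ℝ)..L, deriv g (θ t s) * deriv (fun τ => θ τ s) t := by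
    apply intervalIntegral.integral_congr
    intro s hs
    rw [Set.uIcc_of_le hL.le] at hs
    show deriv g (θ t s) * (φ (t, s)) (1, 0) = deriv g (θ t s) * deriv (fun τ => θ τ s) t
    rw [(hθdiff t ht s hs).deriv]
  rw [heq] at hmain
  exact hmain

lemma ae_uIoc_Ioo {L : ℝ} (hL : 0 < L) :
    ∀ᵐ s : ℝ, s ∈ Set.uIoc (0:ℝ) L → s ∈ Set.Ioo 0 L := by
  have h1 : ∀ᵐ s : ℝ, s ≠ L := by
    exact (compl_mem_ae_iff.mpr (measure_singleton (L : ℝ)))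
  filter_upwards [h1] with s hs hmem
  rw [Set.uIoc_of_le hL.le] at hmem
  exact ⟨hmem.1, lt_of_le_of_ne hmem.2 hs⟩

lemma key_vanish {L : ℝ} (hL : 0 < L) {w h H D P2 P3 : ℝ → ℝ} {l0 l1 : ℝ}
    (hw : ContinuousOn w (Set.Icc (0:ℝ) L)) (hHc : ContinuousOn H (Set.Icc (0:ℝ) L))
    (hP2 : ContinuousOn P2 (Set.Icc (0:ℝ) L)) (hP3 : ContinuousOn P3 (Set.Icc (0:ℝ) L))
    (hhH : ∀ s ∈ Set.Ioo (0:ℝ) L, h s = H s)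
    (hD : ∀ s ∈ Set.Icc (0:ℝ) L, w s * D s = w s * h s - l0 * P2 s + l1 * P3 s)
    (hrow : l0 * (∫ s in (0:ℝ)..L, P2 s) - l1 * (∫ s in (0:ℝ)..L, P3 s)
      = ∫ s in (0:ℝ)..L, w s * h s) :
    (∫ s in (0:ℝ)..L, w s * D s) = 0 := by
  have hIcc : Set.uIcc (0:ℝ) L = Set.Icc 0 L := Set.uIcc_of_le hL.le
  have hsub : Set.uIoc (0:ℝ) L ⊆ Set.Icc (0:ℝ) L := by
    rw [Set.uIoc_of_le hL.le]; exact Set.Ioc_subset_Icc_self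
  have hwH : IntervalIntegrable (fun s => w s * H s) volume 0 L := by
    apply ContinuousOn.intervalIntegrable; rw [hIcc]; exact hw.mul hHc
  have hiP2 : IntervalIntegrable (fun s => l0 * P2 s) volume 0 L := by
    apply ContinuousOn.intervalIntegrable; rw [hIcc]; exact continuousOn_const.mul hP2
  have hiP3 : IntervalIntegrable (fun s => l1 * P3 s) volume 0 L := by
    apply ContinuousOn.intervalIntegrable; rw [hIcc]; exact continuousOn_const.mul hP3
  have h1 : (∫ s in (0:ℝ)..L, w s * D s)
      = ∫ s in (0:ℝ)..L, ((w s * H s - l0 * P2 s) + l1 * P3 s) := by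
    apply intervalIntegral.integral_congr_ae
    filter_upwards [ae_uIoc_Ioo hL] with s hs hmem
    have hIoo := hs hmem
    rw [hD s (Set.Ioo_subset_Icc_self hIoo), hhH s hIoo]
  have h3 : (∫ s in (0:ℝ)..L, w s * H s) = ∫ s in (0:ℝ)..L, w s * h s := by
    apply intervalIntegral.integral_congr_ae
    filter_upwards [ae_uIoc_Ioo hL] with s hs hmem
    rw [hhH s (hs hmem)]
  rw [h1, intervalIntegral.integral_add (hwH.sub hiP2) hiP3,
    intervalIntegral.integral_sub hwH hiP2, intervalIntegral.integral_const_mul,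
    intervalIntegral.integral_const_mul, h3]
  linarith

lemma cont_at_zero {L T : ℝ} (hL : 0 < L) (hT : 0 < T) {θ : ℝ → ℝ → ℝ}
    (hθ : ContDiffOn ℝ (⊤ : ℕ∞) (Function.uncurry θ) (Set.Ico (0:ℝ) T ×ˢ Set.Icc (0:ℝ) L))
    {g : ℝ → ℝ} (hg : Continuous g) (hb : ∀ y, ‖g y‖ ≤ 1) :
    ContinuousWithinAt (fun τ => ∫ s in (0:ℝ)..L, g (θ τ s)) (Set.Ico 0 T) 0 := by
  have hIoc : Set.uIoc (0:ℝ) L = Set.Ioc 0 L := Set.uIoc_of_le hL.le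
  have hslice : ∀ x ∈ Set.Ico (0:ℝ) T, ContinuousOn (fun s => θ x s) (Set.Icc (0:ℝ) L) := by
    intro x hx
    exact hθ.continuousOn.comp (continuous_const.prodMk continuous_id).continuousOn
      (fun s hs => ⟨hx, hs⟩)
  apply intervalIntegral.continuousWithinAt_of_dominated_interval (bound := fun _ => (1:ℝ))
  · filter_upwards [self_mem_nhdsWithin] with x hx
    rw [hIoc]
    exact ((hg.comp_continuousOn (hslice x hx)).mono Set.Ioc_subset_Icc_self).aestronglyMeasurable
      measurableSet_Ioc
  · exact Eventually.of_forall fun x => Eventually.of_forall fun s _ => hb _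
  · exact intervalIntegrable_const
  · refine Eventually.of_forall fun s hs => ?_
    have hsIcc : s ∈ Set.Icc (0:ℝ) L := by
      rw [hIoc] at hs; exact Set.Ioc_subset_Icc_self hs
    have hf : ContinuousWithinAt (fun x : ℝ => ((x, s) : ℝ × ℝ)) (Set.Ico (0:ℝ) T) 0 :=
      (continuous_id.prodMk continuous_const).continuousWithinAt
    have hcomp : ContinuousWithinAt (fun x : ℝ => θ x s) (Set.Ico (0:ℝ) T) 0 :=
      ContinuousWithinAt.comp (f := fun x : ℝ => ((x, s) : ℝ × ℝ))
        (g := Function.uncurry θ) (x := 0)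
        (hθ.continuousOn (0, s) ⟨⟨le_refl 0, hT⟩, hsIcc⟩) hf (fun x hx => ⟨hx, hsIcc⟩)
    exact hg.continuousAt.comp_continuousWithinAt hcomp


/-- along a smooth solution of the flow system, the integrals
`∫₀^L cos θ ds` and `∫₀^L sin θ ds` have vanishing time derivative; in particular,
if they vanish initially, they vanish for all times. -/
theorem closure_integrals_conserved (L μ c₀ T : ℝ) (ω : ℤ) (β : ℝ → ℝ)
    (hL : 0 < L) (hμ : 0 < μ) (hT : 0 < T)
    (hβ : ContDiff ℝ (⊤ : ℕ∞) β) (hβpos : ∀ x, 0 < β x)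
    (θ ρ : ℝ → ℝ → ℝ)
    (hsol : IsFlowSolution L μ c₀ ω β (Set.Ico 0 T) θ ρ) :
    (∀ t ∈ Set.Ioo (0:ℝ) T,
        deriv (fun τ => ∫ s in (0:ℝ)..L, Real.cos (θ τ s)) t = 0 ∧
        deriv (fun τ => ∫ s in (0:ℝ)..L, Real.sin (θ τ s)) t = 0) ∧
    (((∫ s in (0:ℝ)..L, Real.cos (θ 0 s)) = 0 ∧ (∫ s in (0:ℝ)..L, Real.sin (θ 0 s)) = 0) →
      ∀ t ∈ Set.Ico (0:ℝ) T,
        (∫ s in (0:ℝ)..L, Real.cos (θ t s)) = 0 ∧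
        (∫ s in (0:ℝ)..L, Real.sin (θ t s)) = 0) := by
  obtain ⟨hθ, hρ, hunit, heq, -, -, -, -, -⟩ := hsol
  have hIc : UniqueDiffOn ℝ (Set.Icc (0:ℝ) L) := uniqueDiffOn_Icc hL
  have main : ∀ t ∈ Set.Ioo (0:ℝ) T,
      HasDerivAt (fun τ => ∫ s in (0:ℝ)..L, Real.cos (θ τ s)) 0 t ∧
      HasDerivAt (fun τ => ∫ s in (0:ℝ)..L, Real.sin (θ τ s)) 0 t := by
    intro t ht
    have ht' : t ∈ Set.Ico (0:ℝ) T := ⟨ht.1.le, ht.2⟩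
    have hθt : ContDiffOn ℝ (⊤ : ℕ∞) (θ t) (Set.Icc (0:ℝ) L) := by
      have h2 : ContDiffOn ℝ (⊤ : ℕ∞) (Function.uncurry θ ∘ fun s : ℝ => (t, s)) (Set.Icc (0:ℝ) L) :=
        hθ.comp ((contDiff_const.prodMk contDiff_id).contDiffOn) (fun s hs => ⟨ht', hs⟩)
      exact h2
    have hρt : ContDiffOn ℝ (⊤ : ℕ∞) (ρ t) (Set.Icc (0:ℝ) L) := by
      have h2 : ContDiffOn ℝ (⊤ : ℕ∞) (Function.uncurry ρ ∘ fun s : ℝ => (t, s)) (Set.Icc (0:ℝ) L) :=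
        hρ.comp ((contDiff_const.prodMk contDiff_id).contDiffOn) (fun s hs => ⟨ht', hs⟩)
      exact h2
    have hψ : ContDiffOn ℝ (⊤ : ℕ∞) (derivWithin (θ t) (Set.Icc (0:ℝ) L)) (Set.Icc (0:ℝ) L) :=
      hθt.derivWithin hIc (by simp)
    have hΦ : ContDiffOn ℝ (⊤ : ℕ∞)
        (fun x => β (ρ t x) * (derivWithin (θ t) (Set.Icc (0:ℝ) L) x - c₀))
        (Set.Icc (0:ℝ) L) :=
      (hβ.comp_contDiffOn hρt).mul (hψ.sub contDiffOn_const)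
    have hHc : ContinuousOn
        (derivWithin (fun x => β (ρ t x) * (derivWithin (θ t) (Set.Icc (0:ℝ) L) x - c₀))
          (Set.Icc (0:ℝ) L)) (Set.Icc (0:ℝ) L) :=
      ((hΦ.derivWithin hIc (by simp) :
        ContDiffOn ℝ (⊤ : ℕ∞) (derivWithin (fun x => β (ρ t x) * (derivWithin (θ t) (Set.Icc (0:ℝ) L) x - c₀)) (Set.Icc (0:ℝ) L)) (Set.Icc (0:ℝ) L))).continuousOn
    have hhH : ∀ s ∈ Set.Ioo (0:ℝ) L,
        deriv (fun x => β (ρ t x) * (deriv (θ t) x - c₀)) s =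
        derivWithin (fun x => β (ρ t x) * (derivWithin (θ t) (Set.Icc (0:ℝ) L) x - c₀))
          (Set.Icc (0:ℝ) L) s := by
      intro s hs
      have hagree : (fun x => β (ρ t x) * (deriv (θ t) x - c₀)) =ᶠ[𝓝 s]
          (fun x => β (ρ t x) * (derivWithin (θ t) (Set.Icc (0:ℝ) L) x - c₀)) := by
        filter_upwards [Ioo_mem_nhds hs.1 hs.2] with x hx
        rw [derivWithin_of_mem_nhds (Icc_mem_nhds hx.1 hx.2)]
      rw [hagree.deriv_eq, ← derivWithin_of_mem_nhds (Icc_mem_nhds hs.1 hs.2)]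
    have hcθ : ContinuousOn (θ t) (Set.Icc (0:ℝ) L) := hθt.continuousOn
    have hsin : ContinuousOn (fun s => Real.sin (θ t s)) (Set.Icc (0:ℝ) L) :=
      Real.continuous_sin.comp_continuousOn hcθ
    have hcos : ContinuousOn (fun s => Real.cos (θ t s)) (Set.Icc (0:ℝ) L) :=
      Real.continuous_cos.comp_continuousOn hcθ
    -- matrix identity
    have hdet := (Matrix.isUnit_iff_isUnit_det _).mp (hunit t ht')
    have hmv : (PiMat L (θ t)).mulVec (lambdaTheta L c₀ β (θ t) (ρ t)) =
        ![∫ s in (0:ℝ)..L,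
            (-Real.sin (θ t s)) * deriv (fun x => β (ρ t x) * (deriv (θ t) x - c₀)) s,
          ∫ s in (0:ℝ)..L,
            Real.cos (θ t s) * deriv (fun x => β (ρ t x) * (deriv (θ t) x - c₀)) s] := by
      rw [show lambdaTheta L c₀ β (θ t) (ρ t) = (PiMat L (θ t))⁻¹.mulVec
          ![∫ s in (0:ℝ)..L,
              (-Real.sin (θ t s)) * deriv (fun x => β (ρ t x) * (deriv (θ t) x - c₀)) s,
            ∫ s in (0:ℝ)..L,
              Real.cos (θ t s) * deriv (fun x => β (ρ t x) * (deriv (θ t) x - c₀)) s] from rfl,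
        Matrix.mulVec_mulVec, Matrix.mul_nonsing_inv _ hdet, Matrix.one_mulVec]
    have h0 := congrFun hmv 0
    have h1 := congrFun hmv 1
    simp only [PiMat, Matrix.mulVec, dotProduct, Fin.sum_univ_two, Matrix.of_apply,
      Matrix.cons_val', Matrix.cons_val_zero, Matrix.cons_val_one, Matrix.head_cons,
      Matrix.empty_val', Matrix.cons_val_fin_one, Matrix.head_fin_const] at h0 h1
    constructor
    · -- cosine
      have hw : ContinuousOn (fun s => -Real.sin (θ t s)) (Set.Icc (0:ℝ) L) := hsin.neg
      have hP2 : ContinuousOn (fun s => Real.sin (θ t s) ^ 2) (Set.Icc (0:ℝ) L) := hsin.pow 2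
      have hP3 : ContinuousOn (fun s => Real.sin (θ t s) * Real.cos (θ t s))
          (Set.Icc (0:ℝ) L) := hsin.mul hcos
      have hD : ∀ s ∈ Set.Icc (0:ℝ) L,
          (-Real.sin (θ t s)) * deriv (fun τ => θ τ s) t =
          (-Real.sin (θ t s)) * deriv (fun x => β (ρ t x) * (deriv (θ t) x - c₀)) s
          - lambdaTheta L c₀ β (θ t) (ρ t) 0 * Real.sin (θ t s) ^ 2
          + lambdaTheta L c₀ β (θ t) (ρ t) 1 * (Real.sin (θ t s) * Real.cos (θ t s)) := by
        intro s hs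
        rw [heq t ht' s hs]; ring
      have hrow : lambdaTheta L c₀ β (θ t) (ρ t) 0 * (∫ s in (0:ℝ)..L, Real.sin (θ t s) ^ 2)
          - lambdaTheta L c₀ β (θ t) (ρ t) 1 *
            (∫ s in (0:ℝ)..L, Real.sin (θ t s) * Real.cos (θ t s)) =
          ∫ s in (0:ℝ)..L,
            (-Real.sin (θ t s)) * deriv (fun x => β (ρ t x) * (deriv (θ t) x - c₀)) s := by
        linarith [h0]
      have hvan := key_vanish hL hw hHc hP2 hP3 hhH hD hrow
      have hdc := timeDeriv_integral hL hθ ht (Real.contDiff_cos (n := (⊤ : ℕ∞)))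
      have e : (∫ s in (0:ℝ)..L, deriv Real.cos (θ t s) * deriv (fun τ => θ τ s) t)
          = ∫ s in (0:ℝ)..L, (-Real.sin (θ t s)) * deriv (fun τ => θ τ s) t := by
        apply intervalIntegral.integral_congr
        intro s hs
        simp [Real.deriv_cos]
      rw [e.trans hvan] at hdc
      exact hdc
    · -- sine
      have hw : ContinuousOn (fun s => Real.cos (θ t s)) (Set.Icc (0:ℝ) L) := hcos
      have hP2 : ContinuousOn (fun s => -(Real.sin (θ t s) * Real.cos (θ t s)))
          (Set.Icc (0:ℝ) L) := (hsin.mul hcos).neg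
      have hP3 : ContinuousOn (fun s => -(Real.cos (θ t s) ^ 2)) (Set.Icc (0:ℝ) L) :=
        (hcos.pow 2).neg
      have hD : ∀ s ∈ Set.Icc (0:ℝ) L,
          Real.cos (θ t s) * deriv (fun τ => θ τ s) t =
          Real.cos (θ t s) * deriv (fun x => β (ρ t x) * (deriv (θ t) x - c₀)) s
          - lambdaTheta L c₀ β (θ t) (ρ t) 0 * (-(Real.sin (θ t s) * Real.cos (θ t s)))
          + lambdaTheta L c₀ β (θ t) (ρ t) 1 * (-(Real.cos (θ t s) ^ 2)) := by
        intro s hs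
        rw [heq t ht' s hs]; ring
      have hrow : lambdaTheta L c₀ β (θ t) (ρ t) 0 *
            (∫ s in (0:ℝ)..L, -(Real.sin (θ t s) * Real.cos (θ t s)))
          - lambdaTheta L c₀ β (θ t) (ρ t) 1 * (∫ s in (0:ℝ)..L, -(Real.cos (θ t s) ^ 2)) =
          ∫ s in (0:ℝ)..L,
            Real.cos (θ t s) * deriv (fun x => β (ρ t x) * (deriv (θ t) x - c₀)) s := by
        rw [intervalIntegral.integral_neg, intervalIntegral.integral_neg]
        linarith [h1]
      have hvan := key_vanish hL hw hHc hP2 hP3 hhH hD hrow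
      have hdc := timeDeriv_integral hL hθ ht (Real.contDiff_sin (n := (⊤ : ℕ∞)))
      have e : (∫ s in (0:ℝ)..L, deriv Real.sin (θ t s) * deriv (fun τ => θ τ s) t)
          = ∫ s in (0:ℝ)..L, Real.cos (θ t s) * deriv (fun τ => θ τ s) t := by
        apply intervalIntegral.integral_congr
        intro s hs
        simp [Real.deriv_sin]
      rw [e.trans hvan] at hdc
      exact hdc
  refine ⟨fun t ht => ⟨(main t ht).1.deriv, (main t ht).2.deriv⟩, ?_⟩
  rintro ⟨hc0, hs0⟩ t ⟨ht0, htT⟩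
  rcases eq_or_lt_of_le ht0 with hteq | h
  · rw [← hteq]; exact ⟨hc0, hs0⟩
  · have hconst : ∀ f : ℝ → ℝ, (∀ x ∈ Set.Ioo (0:ℝ) T, HasDerivAt f 0 x) →
        ContinuousWithinAt f (Set.Ico 0 T) 0 → f t = f 0 := by
      intro f hder hcont
      have hstep : ∀ ε ∈ Set.Ioo (0:ℝ) t, f t = f ε := by
        intro ε hε
        have hca : ContinuousOn f (Set.Icc ε t) := fun x hx =>
          (hder x ⟨lt_of_lt_of_le hε.1 hx.1, lt_of_le_of_lt hx.2 htT⟩).continuousAt.continuousWithinAt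
        have hdz : ∀ x ∈ Set.Ico ε t, HasDerivWithinAt f 0 (Set.Ici x) x := fun x hx =>
          (hder x ⟨lt_of_lt_of_le hε.1 hx.1, lt_trans hx.2 htT⟩).hasDerivWithinAt
        exact constant_of_has_deriv_right_zero hca hdz t (Set.right_mem_Icc.mpr hε.2.le)
      have hne : (𝓝[Set.Ioo (0:ℝ) t] (0:ℝ)).NeBot := by
        rw [← mem_closure_iff_nhdsWithin_neBot, closure_Ioo (ne_of_lt h)]
        exact ⟨le_refl 0, h.le⟩
      have h1 : Filter.Tendsto f (𝓝[Set.Ioo (0:ℝ) t] 0) (𝓝 (f 0)) :=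
        hcont.mono (fun x hx => ⟨hx.1.le, lt_trans hx.2 htT⟩)
      have h2 : Filter.Tendsto f (𝓝[Set.Ioo (0:ℝ) t] 0) (𝓝 (f t)) := by
        refine Filter.Tendsto.congr' ?_ tendsto_const_nhds
        filter_upwards [self_mem_nhdsWithin] with ε hε
        exact hstep ε hε
      exact tendsto_nhds_unique h2 h1
    constructor
    · rw [hconst _ (fun x hx => (main x hx).1)
        (cont_at_zero hL hT hθ Real.continuous_cos
          (fun y => by rw [Real.norm_eq_abs]; exact Real.abs_cos_le_one y))]
      exact hc0
    · rw [hconst _ (fun x hx => (main x hx).2)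
        (cont_at_zero hL hT hθ Real.continuous_sin
          (fun y => by rw [Real.norm_eq_abs]; exact Real.abs_sin_le_one y))]
      exact hs0
end

section
/- Let J ⊂ ℝ be a compact interval, M ≥ 0 and let f : ℝ → ℝ be twice continuously differentiable with |f'(x)| ≤ M and |f''(x)| ≤ M for all x ∈ J. Let S ⊆ ℝ, α ∈ (0,1], and let ρ₀, ρ̄ : S → ℝ take values in J and satisfy, for all s₁, s₂ ∈ S, |ρ₀(s₁) − ρ₀(s₂)| ≤ H₀|s₁−s₂|^α, |ρ̄(s₁) − ρ̄(s₂)| ≤ H̄|s₁−s₂|^α and |(ρ₀−ρ̄)(s₁) − (ρ₀−ρ̄)(s₂)| ≤ H_d|s₁−s₂|^α, and let D := sup over s ∈ S of |ρ₀(s) − ρ̄(s)|. Then for all s₁, s₂ ∈ S: |f(ρ₀(s₁)) − f(ρ̄(s₁)) − f(ρ₀(s₂)) + f(ρ̄(s₂))| ≤ (M·H_d + M·(H₀ + H̄)·D)·|s₁ − s₂|^α. In particular, the α-Hölder seminorm of f∘ρ₀ − f∘ρ̄ is at most M·H_d + M·(H₀ + H̄)·D. -/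
/-!
Set `d = ρ₀ - ρ̄`. The mean value theorem applied to
`t ↦ f (ρ̄ s₁ + t d(s₁)) - f (ρ̄ s₂ + t d(s₂))` on `[0, 1]` writes the double difference as
`f'(u₁) d(s₁) - f'(u₂) d(s₂) = f'(u₁) (d(s₁) - d(s₂)) + (f'(u₁) - f'(u₂)) d(s₂)`,
where `uᵢ` is the same convex combination of `ρ̄ sᵢ` and `ρ₀ sᵢ`. The first term is controlled by
`|f'| ≤ M` and the Hölder bound on `d`, the second by the `M`-Lipschitz bound on `f'` (from
`|f''| ≤ M`), `|u₁ - u₂| ≤ (H₀ + H̄) |s₁ - s₂|^α` and `|d| ≤ D`.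
-/

open Set

theorem exists_mem_Ioo_sub_sub_add_eq_deriv_mul_sub_sub_deriv_mul {f : ℝ → ℝ}
    (hf : Differentiable ℝ f) (x₁ y₁ x₂ y₂ : ℝ) :
    ∃ c ∈ Ioo (0 : ℝ) 1, f x₁ - f y₁ - f x₂ + f y₂ =
      deriv f (y₁ + c * (x₁ - y₁)) * (x₁ - y₁) - deriv f (y₂ + c * (x₂ - y₂)) * (x₂ - y₂) := by
  let F : ℝ → ℝ := fun t => f (y₁ + t * (x₁ - y₁)) - f (y₂ + t * (x₂ - y₂))
  have hF : ∀ t, HasDerivAt F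
      (deriv f (y₁ + t * (x₁ - y₁)) * (x₁ - y₁) - deriv f (y₂ + t * (x₂ - y₂)) * (x₂ - y₂)) t := by
    intro t
    have line : ∀ y d : ℝ, HasDerivAt (fun t : ℝ => y + t * d) d t := fun y d => by
      simpa using (hasDerivAt_mul_const d).const_add y
    exact ((hf _).hasDerivAt.comp t (line y₁ _)).sub ((hf _).hasDerivAt.comp t (line y₂ _))
  obtain ⟨c, hc, hslope⟩ := exists_hasDerivAt_eq_slope F _ one_pos
    (fun t _ => (hF t).continuousAt.continuousWithinAt) (fun t _ => hF t)
  refine ⟨c, hc, ?_⟩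
  rw [hslope]
  simp only [F]
  ring_nf

theorem abs_sub_sub_add_le {f : ℝ → ℝ} {s : Set ℝ} {M₁ M₂ : ℝ} (hf : Differentiable ℝ f)
    (hs : Convex ℝ s) (hf' : ∀ x ∈ s, |deriv f x| ≤ M₁)
    (hf'_lip : ∀ u ∈ s, ∀ v ∈ s, |deriv f u - deriv f v| ≤ M₂ * |u - v|) (hM₂ : 0 ≤ M₂)
    {x₁ y₁ x₂ y₂ : ℝ} (hx₁ : x₁ ∈ s) (hy₁ : y₁ ∈ s) (hx₂ : x₂ ∈ s) (hy₂ : y₂ ∈ s) :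
    |f x₁ - f y₁ - f x₂ + f y₂| ≤
      M₁ * |(x₁ - y₁) - (x₂ - y₂)| + M₂ * (|x₁ - x₂| + |y₁ - y₂|) * |x₂ - y₂| := by
  obtain ⟨c, ⟨hc₀, hc₁⟩, hmvt⟩ :=
    exists_mem_Ioo_sub_sub_add_eq_deriv_mul_sub_sub_deriv_mul hf x₁ y₁ x₂ y₂
  set u₁ := y₁ + c * (x₁ - y₁)
  set u₂ := y₂ + c * (x₂ - y₂)
  have mem_of_convex : ∀ {x y}, x ∈ s → y ∈ s → y + c * (x - y) ∈ s := fun hx hy => by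
    convert hs hy hx (sub_nonneg.2 hc₁.le) hc₀.le (by ring) using 1
    simp only [smul_eq_mul]
    ring
  have hu : |u₁ - u₂| ≤ |x₁ - x₂| + |y₁ - y₂| := by
    have hsplit : u₁ - u₂ = c * (x₁ - x₂) + (1 - c) * (y₁ - y₂) := by ring
    rw [hsplit]
    refine (abs_add_le _ _).trans ?_
    rw [abs_mul, abs_mul, abs_of_pos hc₀, abs_of_pos (sub_pos.2 hc₁)]
    nlinarith [abs_nonneg (x₁ - x₂), abs_nonneg (y₁ - y₂)]
  have hlip : |deriv f u₁ - deriv f u₂| ≤ M₂ * (|x₁ - x₂| + |y₁ - y₂|) :=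
    (hf'_lip u₁ (mem_of_convex hx₁ hy₁) u₂ (mem_of_convex hx₂ hy₂)).trans
      (mul_le_mul_of_nonneg_left hu hM₂)
  rw [hmvt]
  calc |deriv f u₁ * (x₁ - y₁) - deriv f u₂ * (x₂ - y₂)|
      = |deriv f u₁ * ((x₁ - y₁) - (x₂ - y₂)) + (deriv f u₁ - deriv f u₂) * (x₂ - y₂)| := by
        ring_nf
    _ ≤ |deriv f u₁| * |(x₁ - y₁) - (x₂ - y₂)| + |deriv f u₁ - deriv f u₂| * |x₂ - y₂| := by
        rw [← abs_mul, ← abs_mul]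
        exact abs_add_le _ _
    _ ≤ M₁ * |(x₁ - y₁) - (x₂ - y₂)| + M₂ * (|x₁ - x₂| + |y₁ - y₂|) * |x₂ - y₂| := by
        gcongr
        exact hf' u₁ (mem_of_convex hx₁ hy₁)

theorem ContDiff.abs_deriv_sub_le {f : ℝ → ℝ} {s : Set ℝ} {M : ℝ} (hf : ContDiff ℝ 2 f)
    (hs : Convex ℝ s) (hf'' : ∀ x ∈ s, |deriv (deriv f) x| ≤ M) :
    ∀ u ∈ s, ∀ v ∈ s, |deriv f u - deriv f v| ≤ M * |u - v| := fun _ hu _ hv =>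
  hs.norm_image_sub_le_of_norm_deriv_le (fun x _ => hf.differentiable_deriv_two x) hf'' hv hu

theorem holder_estimate_composition_difference_general (a b M : ℝ)
    (f : ℝ → ℝ) (hf : ContDiff ℝ 2 f)
    (hf1 : ∀ x ∈ Set.Icc a b, |deriv f x| ≤ M)
    (hf2 : ∀ x ∈ Set.Icc a b, |deriv (deriv f) x| ≤ M)
    (S : Set ℝ) (α : ℝ)
    (ρ₀ ρbar : ℝ → ℝ) (H₀ Hbar Hd D : ℝ)
    (hmem₀ : ∀ s ∈ S, ρ₀ s ∈ Set.Icc a b)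
    (hmembar : ∀ s ∈ S, ρbar s ∈ Set.Icc a b)
    (hH₀ : ∀ s₁ ∈ S, ∀ s₂ ∈ S, |ρ₀ s₁ - ρ₀ s₂| ≤ H₀ * |s₁ - s₂| ^ α)
    (hHbar : ∀ s₁ ∈ S, ∀ s₂ ∈ S, |ρbar s₁ - ρbar s₂| ≤ Hbar * |s₁ - s₂| ^ α)
    (hHd : ∀ s₁ ∈ S, ∀ s₂ ∈ S,
      |(ρ₀ s₁ - ρbar s₁) - (ρ₀ s₂ - ρbar s₂)| ≤ Hd * |s₁ - s₂| ^ α)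
    (hD : ∀ s ∈ S, |ρ₀ s - ρbar s| ≤ D) :
    ∀ s₁ ∈ S, ∀ s₂ ∈ S,
      |f (ρ₀ s₁) - f (ρbar s₁) - f (ρ₀ s₂) + f (ρbar s₂)|
        ≤ (M * Hd + M * (H₀ + Hbar) * D) * |s₁ - s₂| ^ α := by
  intro s₁ hs₁ s₂ hs₂
  have hM : 0 ≤ M := (abs_nonneg _).trans (hf1 _ (hmem₀ s₁ hs₁))
  have hρ₀ := hH₀ s₁ hs₁ s₂ hs₂
  have hρbar := hHbar s₁ hs₁ s₂ hs₂
  have hsum : |ρ₀ s₁ - ρ₀ s₂| + |ρbar s₁ - ρbar s₂| ≤ (H₀ + Hbar) * |s₁ - s₂| ^ α := by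
    linarith
  calc |f (ρ₀ s₁) - f (ρbar s₁) - f (ρ₀ s₂) + f (ρbar s₂)|
      ≤ M * |(ρ₀ s₁ - ρbar s₁) - (ρ₀ s₂ - ρbar s₂)|
          + M * (|ρ₀ s₁ - ρ₀ s₂| + |ρbar s₁ - ρbar s₂|) * |ρ₀ s₂ - ρbar s₂| :=
        abs_sub_sub_add_le (hf.differentiable (by norm_num)) (convex_Icc a b) hf1
          (hf.abs_deriv_sub_le (convex_Icc a b) hf2) hM (hmem₀ s₁ hs₁) (hmembar s₁ hs₁)
          (hmem₀ s₂ hs₂) (hmembar s₂ hs₂)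
    _ ≤ M * (Hd * |s₁ - s₂| ^ α) + M * ((H₀ + Hbar) * |s₁ - s₂| ^ α) * D := by
        have : 0 ≤ (H₀ + Hbar) * |s₁ - s₂| ^ α := (by positivity : (0 : ℝ) ≤ _).trans hsum
        gcongr
        exacts [hHd s₁ hs₁ s₂ hs₂, hD s₂ hs₂]
    _ = (M * Hd + M * (H₀ + Hbar) * D) * |s₁ - s₂| ^ α := by ring

/-- Hölder seminorm estimate for the difference `f∘ρ₀ − f∘ρ̄` of
compositions with a `C²` function `f` whose first two derivatives are bounded by `M`
on a compact interval `J = [a,b]` containing the values of `ρ₀` and `ρ̄`. -/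
theorem holder_estimate_composition_difference (a b M : ℝ) (hab : a ≤ b) (hM : 0 ≤ M)
    (f : ℝ → ℝ) (hf : ContDiff ℝ 2 f)
    (hf1 : ∀ x ∈ Set.Icc a b, |deriv f x| ≤ M)
    (hf2 : ∀ x ∈ Set.Icc a b, |deriv (deriv f) x| ≤ M)
    (S : Set ℝ) (α : ℝ) (hα : α ∈ Set.Ioc (0:ℝ) 1)
    (ρ₀ ρbar : ℝ → ℝ) (H₀ Hbar Hd D : ℝ)
    (hmem₀ : ∀ s ∈ S, ρ₀ s ∈ Set.Icc a b)
    (hmembar : ∀ s ∈ S, ρbar s ∈ Set.Icc a b)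
    (hH₀ : ∀ s₁ ∈ S, ∀ s₂ ∈ S, |ρ₀ s₁ - ρ₀ s₂| ≤ H₀ * |s₁ - s₂| ^ α)
    (hHbar : ∀ s₁ ∈ S, ∀ s₂ ∈ S, |ρbar s₁ - ρbar s₂| ≤ Hbar * |s₁ - s₂| ^ α)
    (hHd : ∀ s₁ ∈ S, ∀ s₂ ∈ S,
      |(ρ₀ s₁ - ρbar s₁) - (ρ₀ s₂ - ρbar s₂)| ≤ Hd * |s₁ - s₂| ^ α)
    (hD : ∀ s ∈ S, |ρ₀ s - ρbar s| ≤ D) :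
    ∀ s₁ ∈ S, ∀ s₂ ∈ S,
      |f (ρ₀ s₁) - f (ρbar s₁) - f (ρ₀ s₂) + f (ρbar s₂)|
        ≤ (M * Hd + M * (H₀ + Hbar) * D) * |s₁ - s₂| ^ α :=
  holder_estimate_composition_difference_general a b M f hf hf1 hf2 S α ρ₀ ρbar H₀ Hbar Hd D hmem₀
    hmembar hH₀ hHbar hHd hD
end
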